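/- Let W and V be nonzero finite-dimensional real inner product spaces with orthogonal direct sum decompositions W = W_1 ⊕ ... ⊕ W_q and V = V_0 ⊕ V_1 ⊕ ... ⊕ V_p (q ≤ p). For w ∈ W write w_j for the orthogonal projection of w onto W_j, and for v ∈ V write v_j for the orthogonal projection onto V_j. Suppose φ : W → V satisfies: (i) φ(w)_0 = v_0 is a fixed nonzero vector independent of w; (ii) φ(w)_1 = T_1 w_1; (iii) for 1 < j ≤ q, φ(w)_j = T_j w_j + u_j(w_1 + ... + w_{j-1}), where each T_j : W_j → V_j is an injective linear map and each u_j is a polynomial map from W_1 ⊕ ... ⊕ W_{j-1} to V_j (i.e. a finite sum of diagonal evaluations of multilinear maps). Then there exist constants C > 0 and m > 0 such that for all w ∈ W, ‖φ(w)‖ ≥ C·(1 + ‖w‖²)^m. -/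

import Mathlib

open scoped RealInnerProductSpace

/-- `u : E → F` is a polynomial map: a finite sum of diagonal evaluations of
multilinear maps (the `k = 0` term being a constant). -/
def IsPolynomialMap {E F : Type*} [NormedAddCommGroup E] [Module ℝ E]
    [NormedAddCommGroup F] [Module ℝ F] (u : E → F) : Prop :=
  ∃ d : ℕ, ∃ A : (k : ℕ) → MultilinearMap ℝ (fun _ : Fin k => E) F,
    ∀ x : E, u x = ∑ k ∈ Finset.range (d + 1), A k (fun _ => x)

/-!
Put `ρ w = ‖φ w‖`. The `V₀`-component of `φ w` is `v₀ ≠ 0`, so `ρ` is bounded below and constants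
are `O(ρ)`; hence the functions that are `O(ρ ^ n)` for some `n` are closed under sums, powers and
composition with polynomial maps. In the triangular system
`T_j w_j = φ(w)_j - u_j (w₁ + ⋯ + w_{j-1})` the injective `T_j` is bounded below, so by induction
on `j` every partial sum `w₁ + ⋯ + w_j` is `O(ρ ^ n)`; for `j = q` this is `w` itself.
Then `1 + ‖w‖² = O(ρ ^ n)` with `n ≥ 1`, and taking `n`-th roots gives the bound with `m = 1 / n`.
-/

open Asymptotics

theorem MultilinearMap.continuous_of_finiteDimensional {ι : Type*} [Fintype ι]
    {E : ι → Type*} [∀ i, NormedAddCommGroup (E i)] [∀ i, NormedSpace ℝ (E i)]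
    [∀ i, FiniteDimensional ℝ (E i)] {F : Type*} [NormedAddCommGroup F] [NormedSpace ℝ F]
    (A : MultilinearMap ℝ E F) : Continuous A := by
  classical
  let b := fun i => Module.finBasis ℝ (E i)
  have hA : ⇑A = fun m => ∑ r : (i : ι) → Fin (Module.finrank ℝ (E i)),
      (∏ i, (b i).coord (r i) (m i)) • A (fun i => b i (r i)) := by
    ext m
    conv_lhs => rw [← funext fun i => (b i).sum_repr (m i)]
    simp only [A.map_sum, A.map_smul_univ, Module.Basis.coord_apply]
  rw [hA]
  refine continuous_finsetSum _ fun r _ => (continuous_finsetProd _ fun i _ => ?_).smul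
    continuous_const
  exact (LinearMap.continuous_of_finiteDimensional _).comp (continuous_apply i)

section PolyGrowth

variable {α E F : Type*} [NormedAddCommGroup E] [NormedAddCommGroup F] {l : Filter α}
  {ρ : α → ℝ} {f g : α → E}

def IsPolyBigO (l : Filter α) (f : α → E) (ρ : α → ℝ) : Prop :=
  ∃ n : ℕ, f =O[l] fun a => ρ a ^ n

theorem isBigO_pow_pow_of_le (h1 : (fun _ => (1 : ℝ)) =O[l] ρ) {m n : ℕ} (hmn : m ≤ n) :
    (fun a => ρ a ^ m) =O[l] fun a => ρ a ^ n := by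
  simpa [← pow_add, Nat.add_sub_cancel' hmn] using
    (isBigO_refl (fun a => ρ a ^ m) l).mul (h1.pow (n - m))

theorem IsPolyBigO.of_isBigO (h : f =O[l] ρ) : IsPolyBigO l f ρ :=
  ⟨1, by simpa using h⟩

theorem Asymptotics.IsBigO.trans_isPolyBigO {f : α → F} (hfg : f =O[l] g)
    (hg : IsPolyBigO l g ρ) : IsPolyBigO l f ρ :=
  let ⟨n, hn⟩ := hg; ⟨n, hfg.trans hn⟩

theorem isPolyBigO_const (h1 : (fun _ => (1 : ℝ)) =O[l] ρ) (c : E) :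
    IsPolyBigO l (fun _ => c) ρ :=
  (isBigO_const_one ℝ c l).trans_isPolyBigO (.of_isBigO h1)

theorem IsPolyBigO.norm (h : IsPolyBigO l f ρ) : IsPolyBigO l (fun a => ‖f a‖) ρ :=
  let ⟨n, hn⟩ := h; ⟨n, hn.norm_left⟩

theorem IsPolyBigO.pow {f : α → ℝ} (h : IsPolyBigO l f ρ) (d : ℕ) :
    IsPolyBigO l (fun a => f a ^ d) ρ :=
  let ⟨n, hn⟩ := h; ⟨n * d, by simpa [pow_mul] using hn.pow d⟩

theorem IsPolyBigO.add (h1 : (fun _ => (1 : ℝ)) =O[l] ρ) (hf : IsPolyBigO l f ρ)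
    (hg : IsPolyBigO l g ρ) : IsPolyBigO l (fun a => f a + g a) ρ := by
  obtain ⟨m, hm⟩ := hf
  obtain ⟨n, hn⟩ := hg
  exact ⟨max m n, (hm.trans (isBigO_pow_pow_of_le h1 (le_max_left m n))).add
    (hn.trans (isBigO_pow_pow_of_le h1 (le_max_right m n)))⟩

theorem IsPolyBigO.sub (h1 : (fun _ => (1 : ℝ)) =O[l] ρ) (hf : IsPolyBigO l f ρ)
    (hg : IsPolyBigO l g ρ) : IsPolyBigO l (fun a => f a - g a) ρ := by
  simpa only [sub_eq_add_neg] using hf.add h1 (hg.elim fun n hn => ⟨n, hn.neg_left⟩)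

theorem isPolyBigO_sum_Icc_induction (h1 : (fun _ => (1 : ℝ)) =O[l] ρ) {x : ℕ → α → E} {q : ℕ}
    (h : ∀ j < q, IsPolyBigO l (fun a => ∑ i ∈ Finset.Icc 1 j, x i a) ρ →
      IsPolyBigO l (x (j + 1)) ρ) :
    IsPolyBigO l (fun a => ∑ i ∈ Finset.Icc 1 q, x i a) ρ := by
  induction q with
  | zero => simpa using isPolyBigO_const h1 (0 : E)
  | succ q ih =>
    have hq := ih fun j hj => h j (hj.trans q.lt_succ_self)
    simpa only [Finset.sum_Icc_succ_top (Nat.le_add_left 1 q)] using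
      hq.add h1 (h q q.lt_succ_self hq)

theorem IsPolyBigO.exists_pos_mul_rpow_le (h1 : (fun _ => (1 : ℝ)) =O[⊤] ρ) (hρ : 0 ≤ ρ)
    (h : IsPolyBigO ⊤ f ρ) : ∃ C > 0, ∃ m : ℝ, 0 < m ∧ ∀ a, C * (1 + ‖f a‖ ^ 2) ^ m ≤ ρ a := by
  obtain ⟨n, hn⟩ := (isPolyBigO_const h1 1).add h1 (h.norm.pow 2)
  have hn' := (hn.trans (isBigO_pow_pow_of_le h1 n.le_succ)).rpow (r := ((n + 1 : ℕ) : ℝ)⁻¹)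
    (by positivity) (Filter.Eventually.of_forall fun a => pow_nonneg (hρ a) _)
  obtain ⟨c, hc, hO⟩ := hn'.exists_pos
  refine ⟨c⁻¹, inv_pos.2 hc, ((n + 1 : ℕ) : ℝ)⁻¹, by positivity, fun a => ?_⟩
  have := Filter.eventually_top.1 hO.bound a
  rw [Real.pow_rpow_inv_natCast (hρ a) n.succ_ne_zero, Real.norm_of_nonneg (by positivity),
    Real.norm_of_nonneg (hρ a)] at this
  rwa [inv_mul_le_iff₀ hc]

end PolyGrowth

section PolyMaps

variable {E F : Type*} [NormedAddCommGroup E] [NormedSpace ℝ E] [FiniteDimensional ℝ E]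
  [NormedAddCommGroup F] [NormedSpace ℝ F]

theorem IsPolynomialMap.exists_isBigO_one_add_norm_pow {u : E → F} (hu : IsPolynomialMap u) :
    ∃ d : ℕ, u =O[⊤] fun x => (1 + ‖x‖) ^ d := by
  obtain ⟨d, A, hA⟩ := hu
  refine ⟨d, (funext hA).symm ▸ IsBigO.fun_sum fun k hk => ?_⟩
  let Ak : ContinuousMultilinearMap ℝ (fun _ : Fin k => E) F :=
    { A k with cont := (A k).continuous_of_finiteDimensional }
  refine isBigO_of_le' (c := ‖Ak‖) ⊤ fun x => ?_
  have hx : ‖x‖ ^ k ≤ ‖(1 + ‖x‖) ^ d‖ := by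
    rw [Real.norm_of_nonneg (by positivity)]
    calc ‖x‖ ^ k ≤ (1 + ‖x‖) ^ k := by gcongr; linarith
      _ ≤ (1 + ‖x‖) ^ d := pow_le_pow_right₀ (by linarith [norm_nonneg x])
          (Finset.mem_range_succ_iff.1 hk)
  calc ‖A k fun _ => x‖ = ‖Ak fun _ => x‖ := rfl
    _ ≤ ‖Ak‖ * ‖x‖ ^ k := by simpa using Ak.le_opNorm fun _ => x
    _ ≤ ‖Ak‖ * ‖(1 + ‖x‖) ^ d‖ := by gcongr

theorem IsPolynomialMap.comp_isPolyBigO {α : Type*} {l : Filter α} {ρ : α → ℝ} {u : E → F}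
    (hu : IsPolynomialMap u) (h1 : (fun _ => (1 : ℝ)) =O[l] ρ) {f : α → E}
    (hf : IsPolyBigO l f ρ) : IsPolyBigO l (fun a => u (f a)) ρ := by
  obtain ⟨d, hd⟩ := hu.exists_isBigO_one_add_norm_pow
  exact (hd.comp_tendsto Filter.tendsto_top).trans_isPolyBigO
    (((isPolyBigO_const h1 1).add h1 hf.norm).pow d)

theorem LinearMap.isBigO_comp_rev_of_injective (T : E →ₗ[ℝ] F) (hT : Function.Injective T)
    {α : Type*} (f : α → E) (l : Filter α) : f =O[l] fun a => T (f a) := by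
  obtain ⟨K, -, hK⟩ := T.injective_iff_antilipschitz.1 hT
  exact isBigO_of_le' l fun a => hK.le_mul_norm (map_zero T) (f a)

end PolyMaps

open scoped InnerProductSpace in
theorem sum_orthogonalProjectionOnto_eq_self {𝕜 E ι : Type*} [RCLike 𝕜] [NormedAddCommGroup E]
    [InnerProductSpace 𝕜 E] {K : ι → Submodule 𝕜 E} [∀ i, CompleteSpace (K i)] (s : Finset ι)
    (horth : ∀ i ∈ s, ∀ j ∈ s, i ≠ j → ∀ x ∈ K i, ∀ y ∈ K j, ⟪x, y⟫_𝕜 = 0)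
    (hspan : (⨆ i ∈ s, K i) = ⊤) (x : E) :
    ∑ i ∈ s, ((K i).orthogonalProjectionOnto x : E) = x := by
  have hfam : OrthogonalFamily 𝕜 (fun i : s => K i) fun i => (K i).subtypeₗᵢ :=
    orthogonalFamily_iff_pairwise.2 fun i j hij => Submodule.isOrtho_iff_inner_eq.2 <|
      horth i i.2 j j.2 (Subtype.coe_injective.ne hij)
  have hx : x ∈ ⨆ i : s, K i := by
    have : (⨆ i : s, K i) = ⊤ := (iSup_subtype'' (s : Set ι) K).trans hspan
    exact this ▸ Submodule.mem_top
  have := hfam.sum_projection_of_mem_iSup x hx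
  rwa [Finset.sum_coe_sort s fun i => (K i).starProjection x] at this

theorem harish_chandra_key_lemma_general
    {W V : Type*} [NormedAddCommGroup W] [InnerProductSpace ℝ W] [FiniteDimensional ℝ W]
    [NormedAddCommGroup V] [InnerProductSpace ℝ V] [FiniteDimensional ℝ V]
    (q : ℕ)
    (Wsub : ℕ → Submodule ℝ W) (Vsub : ℕ → Submodule ℝ V)
    -- the `W_j`, `1 ≤ j ≤ q`, are pairwise orthogonal and span `W`
    (hWorth : ∀ i ∈ Finset.Icc 1 q, ∀ j ∈ Finset.Icc 1 q, i ≠ j →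
      ∀ x ∈ Wsub i, ∀ y ∈ Wsub j, ⟪x, y⟫ = 0)
    (hWspan : (⨆ j ∈ Finset.Icc 1 q, Wsub j) = ⊤)
    (φ : W → V) (v₀ : V) (hv₀ : v₀ ≠ 0)
    -- (i) the `V₀`-component of `φ w` is the fixed nonzero vector `v₀`
    (h₀ : ∀ w : W, (Submodule.orthogonalProjectionOnto (Vsub 0) (φ w) : V) = v₀)
    (T : (j : ℕ) → (Wsub j →ₗ[ℝ] V))
    (hTinj : ∀ j ∈ Finset.Icc 1 q, Function.Injective (T j))
    (u : ℕ → W → V)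
    (hupoly : ∀ j, 1 < j → j ≤ q → IsPolynomialMap (u j))
    -- (ii) the `V₁`-component of `φ w` is `T₁ w₁`
    (h₁ : ∀ w : W,
      (Submodule.orthogonalProjectionOnto (Vsub 1) (φ w) : V) = T 1 (Submodule.orthogonalProjectionOnto (Wsub 1) w))
    -- (iii) for `1 < j ≤ q`, the `V_j`-component of `φ w` is
    -- `T_j w_j + u_j (w₁ + ⋯ + w_{j-1})`
    (hj : ∀ j, 1 < j → j ≤ q → ∀ w : W,
      (Submodule.orthogonalProjectionOnto (Vsub j) (φ w) : V) =
        T j (Submodule.orthogonalProjectionOnto (Wsub j) w) +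
          u j (∑ i ∈ Finset.Icc 1 (j - 1), (Submodule.orthogonalProjectionOnto (Wsub i) w : W))) :
    ∃ C : ℝ, 0 < C ∧ ∃ m : ℝ, 0 < m ∧
      ∀ w : W, ‖φ w‖ ≥ C * (1 + ‖w‖ ^ 2) ^ m := by
  set ρ : W → ℝ := fun w => ‖φ w‖
  have hprojV_le (j : ℕ) (w : W) :
      ‖(Submodule.orthogonalProjectionOnto (Vsub j) (φ w) : V)‖ ≤ ρ w :=
    (Vsub j).norm_orthogonalProjectionOnto_apply_le (φ w)
  have h1 : (fun _ => (1 : ℝ)) =O[⊤] ρ :=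
    (isBigO_const_left_iff_pos_le_norm one_ne_zero).2 ⟨‖v₀‖, norm_pos_iff.2 hv₀,
      Filter.Eventually.of_forall fun w => by simpa [ρ, h₀ w] using hprojV_le 0 w⟩
  have hprojV (j : ℕ) :
      IsPolyBigO ⊤ (fun w => (Submodule.orthogonalProjectionOnto (Vsub j) (φ w) : V)) ρ :=
    .of_isBigO <| isBigO_of_le ⊤ fun w => (hprojV_le j w).trans (le_abs_self _)
  have hsum : IsPolyBigO ⊤
      (fun w => ∑ i ∈ Finset.Icc 1 q, (Submodule.orthogonalProjectionOnto (Wsub i) w : W)) ρ := by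
    refine isPolyBigO_sum_Icc_induction h1 fun j hjq hs => ?_
    have hj1 : j + 1 ∈ Finset.Icc 1 q := Finset.mem_Icc.2 ⟨by omega, hjq⟩
    have hT := (T (j + 1)).isBigO_comp_rev_of_injective (hTinj _ hj1)
      ((Wsub (j + 1)).orthogonalProjectionOnto ·) ⊤
    refine (isBigO_norm_left (f' := fun w => ((Wsub (j + 1)).orthogonalProjectionOnto w : W))).1
      hT.norm_left |>.trans_isPolyBigO ?_
    rcases j.eq_zero_or_pos with rfl | hj0
    · simpa [← h₁] using hprojV 1
    · have := (hprojV (j + 1)).sub h1 ((hupoly (j + 1) (by omega) hjq).comp_isPolyBigO h1 hs)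
      simpa [hj (j + 1) (by omega) hjq] using this
  rw [funext (sum_orthogonalProjectionOnto_eq_self _ hWorth hWspan)] at hsum
  exact hsum.exists_pos_mul_rpow_le h1 fun w => norm_nonneg _

/-- **Key lemma** (Wallach, after Harish-Chandra).  Let `W = W₁ ⊕ ⋯ ⊕ W_q` and
`V = V₀ ⊕ V₁ ⊕ ⋯ ⊕ V_p` (with `q ≤ p`) be orthogonal decompositions of nonzero
finite-dimensional real inner product spaces, and let `φ : W → V` satisfy:
the `V₀`-component of `φ w` is a fixed nonzero vector `v₀`; the `V₁`-component
of `φ w` is `T₁ w₁`; and for `1 < j ≤ q` the `V_j`-component of `φ w` is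
`T_j w_j + u_j (w₁ + ⋯ + w_{j-1})`, where `T_j : W_j → V_j` is injective linear
and `u_j` is a polynomial map.  Then there are `C > 0` and `m > 0` with
`‖φ w‖ ≥ C * (1 + ‖w‖²) ^ m` for all `w ∈ W`. -/
theorem harish_chandra_key_lemma
    {W V : Type*} [NormedAddCommGroup W] [InnerProductSpace ℝ W] [FiniteDimensional ℝ W]
    [NormedAddCommGroup V] [InnerProductSpace ℝ V] [FiniteDimensional ℝ V]
    [Nontrivial W] [Nontrivial V]
    (q p : ℕ) (hq : 1 ≤ q) (hqp : q ≤ p)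
    (Wsub : ℕ → Submodule ℝ W) (Vsub : ℕ → Submodule ℝ V)
    -- the `W_j`, `1 ≤ j ≤ q`, are pairwise orthogonal and span `W`
    (hWorth : ∀ i ∈ Finset.Icc 1 q, ∀ j ∈ Finset.Icc 1 q, i ≠ j →
      ∀ x ∈ Wsub i, ∀ y ∈ Wsub j, ⟪x, y⟫ = 0)
    (hWspan : (⨆ j ∈ Finset.Icc 1 q, Wsub j) = ⊤)
    -- the `V_j`, `0 ≤ j ≤ p`, are pairwise orthogonal and span `V`
    (hVorth : ∀ i ∈ Finset.range (p + 1), ∀ j ∈ Finset.range (p + 1), i ≠ j →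
      ∀ x ∈ Vsub i, ∀ y ∈ Vsub j, ⟪x, y⟫ = 0)
    (hVspan : (⨆ j ∈ Finset.range (p + 1), Vsub j) = ⊤)
    (φ : W → V) (v₀ : V) (hv₀ : v₀ ≠ 0)
    -- (i) the `V₀`-component of `φ w` is the fixed nonzero vector `v₀`
    (h₀ : ∀ w : W, (Submodule.orthogonalProjectionOnto (Vsub 0) (φ w) : V) = v₀)
    (T : (j : ℕ) → (Wsub j →ₗ[ℝ] V))
    (hTrange : ∀ j ∈ Finset.Icc 1 q, ∀ x : Wsub j, T j x ∈ Vsub j)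
    (hTinj : ∀ j ∈ Finset.Icc 1 q, Function.Injective (T j))
    (u : ℕ → W → V)
    (hupoly : ∀ j, 1 < j → j ≤ q → IsPolynomialMap (u j))
    (hurange : ∀ j, 1 < j → j ≤ q → ∀ x : W, u j x ∈ Vsub j)
    -- (ii) the `V₁`-component of `φ w` is `T₁ w₁`
    (h₁ : ∀ w : W,
      (Submodule.orthogonalProjectionOnto (Vsub 1) (φ w) : V) = T 1 (Submodule.orthogonalProjectionOnto (Wsub 1) w))
    -- (iii) for `1 < j ≤ q`, the `V_j`-component of `φ w` is
    -- `T_j w_j + u_j (w₁ + ⋯ + w_{j-1})`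
    (hj : ∀ j, 1 < j → j ≤ q → ∀ w : W,
      (Submodule.orthogonalProjectionOnto (Vsub j) (φ w) : V) =
        T j (Submodule.orthogonalProjectionOnto (Wsub j) w) +
          u j (∑ i ∈ Finset.Icc 1 (j - 1), (Submodule.orthogonalProjectionOnto (Wsub i) w : W))) :
    ∃ C : ℝ, 0 < C ∧ ∃ m : ℝ, 0 < m ∧
      ∀ w : W, ‖φ w‖ ≥ C * (1 + ‖w‖ ^ 2) ^ m :=
  harish_chandra_key_lemma_general q Wsub Vsub hWorth hWspan φ v₀ hv₀ h₀ T hTinj u hupoly h₁ hj
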